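/- For every s > 0, one has ∫_0^s t·I_0(t)² dt ≤ s·I_1(s)·I_0(s) ≤ s·I_0(s)². -/

import Mathlib

open MeasureTheory Real intervalIntegral

/-- Modified Bessel function of the first kind of integer order `n`:
`I_n(t) = (1/π) ∫_0^π exp(t cos α) cos(n α) dα`. -/
noncomputable def besselI (n : ℤ) (t : ℝ) : ℝ :=
  (1 / Real.pi) * ∫ α in (0:ℝ)..Real.pi, Real.exp (t * Real.cos α) * Real.cos ((n : ℝ) * α)

/-- Modified Bessel function of the second kind of integer order `n`:
`K_n(t) = ∫_0^∞ exp(−t cosh α) cosh(n α) dα`. -/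
noncomputable def besselK (n : ℤ) (t : ℝ) : ℝ :=
  ∫ α in Set.Ioi (0:ℝ), Real.exp (-t * Real.cosh α) * Real.cosh ((n : ℝ) * α)

/-!
Differentiating under the integral sign gives `I₀' = I₁`, and an integration by parts,
`∫₀^π e^{t cos α} cos α dα = t ∫₀^π e^{t cos α} sin² α dα`, turns this into `(t I₁)' = t I₀`.
Hence `(t I₁ I₀)' = t I₀² + t I₁² ≥ t I₀²`, which integrates to the first inequality.
The second one is `I₁ ≤ I₀` (as `cos ≤ 1`) multiplied by `s I₀ ≥ 0`.
-/

theorem hasDerivAt_intervalIntegral_exp_mul {c g : ℝ → ℝ} (hc : Continuous c)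
    (hg : Continuous g) (a b t : ℝ) :
    HasDerivAt (fun x => ∫ α in a..b, exp (x * c α) * g α)
      (∫ α in a..b, exp (t * c α) * (c α * g α)) t := by
  refine (intervalIntegral.hasDerivAt_integral_of_dominated_loc_of_deriv_le
    (F := fun x α => exp (x * c α) * g α) (F' := fun x α => exp (x * c α) * (c α * g α))
    (bound := fun α => exp ((|t| + 1) * |c α|) * |c α * g α|)
    (Metric.ball_mem_nhds t one_pos) ?_ ?_ ?_ ?_ ?_ ?_).2
  · exact .of_forall fun x => (by fun_prop : Continuous _).aestronglyMeasurable
  · exact (by fun_prop : Continuous _).intervalIntegrable _ _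
  · exact (by fun_prop : Continuous _).aestronglyMeasurable
  · refine .of_forall fun α _ x hx => ?_
    have hx : |x| ≤ |t| + 1 := by
      have := abs_sub_abs_le_abs_sub x t
      rw [Metric.mem_ball, Real.dist_eq] at hx
      linarith
    rw [norm_mul, Real.norm_eq_abs, Real.norm_eq_abs, abs_of_pos (exp_pos _)]
    refine mul_le_mul_of_nonneg_right (exp_le_exp.2 ?_) (abs_nonneg _)
    calc x * c α ≤ |x| * |c α| := by rw [← abs_mul]; exact le_abs_self _
      _ ≤ (|t| + 1) * |c α| := by gcongr
  · exact (by fun_prop : Continuous _).intervalIntegrable _ _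
  · refine .of_forall fun α _ x _ => ?_
    simpa [mul_comm, mul_left_comm, mul_assoc] using
      (((hasDerivAt_id x).mul_const (c α)).exp).mul_const (g α)

@[fun_prop]
theorem continuous_besselI (n : ℤ) : Continuous (besselI n) := by
  unfold besselI
  fun_prop

theorem hasDerivAt_besselI (n : ℤ) (t : ℝ) :
    HasDerivAt (besselI n)
      (1 / π * ∫ α in (0:ℝ)..π, exp (t * cos α) * (cos α * cos (n * α))) t :=
  (hasDerivAt_intervalIntegral_exp_mul continuous_cos (by fun_prop) 0 π t).const_mul _

theorem hasDerivAt_besselI_zero (t : ℝ) : HasDerivAt (besselI 0) (besselI 1 t) t := by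
  convert hasDerivAt_besselI 0 t using 1
  simp [besselI]

theorem integral_exp_mul_cos_mul_cos_eq_mul_integral_mul_sin_sq (t : ℝ) :
    ∫ α in (0:ℝ)..π, exp (t * cos α) * cos α =
      t * ∫ α in (0:ℝ)..π, exp (t * cos α) * sin α ^ 2 := by
  rw [intervalIntegral.integral_mul_deriv_eq_deriv_mul
    (fun x _ => ((hasDerivAt_cos x).const_mul t).exp) (fun x _ => hasDerivAt_sin x)
    ((by fun_prop : Continuous _).intervalIntegrable _ _)
    (continuous_cos.intervalIntegrable _ _), ← intervalIntegral.integral_const_mul]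
  simp only [sin_pi, sin_zero, mul_zero, sub_zero, zero_sub, ← intervalIntegral.integral_neg]
  congr 1 with α; ring

theorem hasDerivAt_mul_besselI_one (t : ℝ) :
    HasDerivAt (fun t => t * besselI 1 t) (t * besselI 0 t) t := by
  refine ((hasDerivAt_id' t).mul (hasDerivAt_besselI 1 t)).congr_deriv ?_
  have hsum : (∫ α in (0:ℝ)..π, exp (t * cos α) * sin α ^ 2) +
      ∫ α in (0:ℝ)..π, exp (t * cos α) * (cos α * cos α) =
        ∫ α in (0:ℝ)..π, exp (t * cos α) := by
    rw [← intervalIntegral.integral_add ((by fun_prop : Continuous _).intervalIntegrable _ _)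
      ((by fun_prop : Continuous _).intervalIntegrable _ _)]
    congr 1 with α
    linear_combination exp (t * cos α) * sin_sq_add_cos_sq α
  simp only [besselI, Int.cast_one, Int.cast_zero, one_mul, zero_mul, cos_zero, mul_one,
    integral_exp_mul_cos_mul_cos_eq_mul_integral_mul_sin_sq]
  linear_combination t / π * hsum

theorem besselI_one_le_besselI_zero (t : ℝ) : besselI 1 t ≤ besselI 0 t := by
  simp only [besselI, Int.cast_one, Int.cast_zero, one_mul, zero_mul, cos_zero, mul_one]
  gcongr
  refine intervalIntegral.integral_mono_on pi_pos.le
    ((by fun_prop : Continuous _).intervalIntegrable _ _)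
    ((by fun_prop : Continuous _).intervalIntegrable _ _) fun α _ => ?_
  exact mul_le_of_le_one_right (exp_pos _).le (cos_le_one α)

theorem besselI_zero_nonneg (t : ℝ) : 0 ≤ besselI 0 t := by
  simp only [besselI, Int.cast_zero, zero_mul, cos_zero, mul_one]
  have hint := intervalIntegral.integral_nonneg (μ := volume) pi_pos.le
    fun α _ => (exp_pos (t * cos α)).le
  positivity

theorem hasDerivAt_mul_besselI_one_mul_besselI_zero (t : ℝ) :
    HasDerivAt (fun t => t * besselI 1 t * besselI 0 t)
      (t * besselI 0 t ^ 2 + t * besselI 1 t ^ 2) t :=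
  ((hasDerivAt_mul_besselI_one t).mul (hasDerivAt_besselI_zero t)).congr_deriv (by ring)

/-- `∫_0^s t·I_0(t)² dt ≤ s·I_1(s)·I_0(s) ≤ s·I_0(s)²` for `s > 0`. -/
theorem integral_mul_besselI_zero_sq_le (s : ℝ) (hs : 0 < s) :
    (∫ t in (0:ℝ)..s, t * (besselI 0 t) ^ 2) ≤ s * besselI 1 s * besselI 0 s ∧
    s * besselI 1 s * besselI 0 s ≤ s * (besselI 0 s) ^ 2 := by
  have hftc : ∫ t in (0:ℝ)..s, (t * besselI 0 t ^ 2 + t * besselI 1 t ^ 2) =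
      s * besselI 1 s * besselI 0 s := by
    simpa using intervalIntegral.integral_eq_sub_of_hasDerivAt
      (fun t _ => hasDerivAt_mul_besselI_one_mul_besselI_zero t)
      ((by fun_prop : Continuous _).intervalIntegrable 0 s)
  constructor
  · rw [← hftc]
    refine intervalIntegral.integral_mono_on hs.le
      ((by fun_prop : Continuous _).intervalIntegrable _ _)
      ((by fun_prop : Continuous _).intervalIntegrable _ _) fun t ht => ?_
    have hI₁ := mul_nonneg ht.1 (sq_nonneg (besselI 1 t))
    linarith
  · rw [sq, ← mul_assoc]
    exact mul_le_mul_of_nonneg_right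
      (mul_le_mul_of_nonneg_left (besselI_one_le_besselI_zero s) hs.le) (besselI_zero_nonneg s)
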